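/- Let E be a real inner product space, J : E → E skew-adjoint, C : F → E linear, D : F → F self-adjoint semi-elliptic, B : U → E linear, and e ∈ E. If a curve z satisfies z'(t) = (J - C∘D∘C*) e + B (u t), then for ℰ(t) := ⟨e, z t⟩ one has ℰ'(t) = -⟨C* e, D (C* e)⟩ + ⟨B* e, u t⟩ ≤ ⟨B* e, u t⟩. -/

import Mathlib

open RealInnerProductSpace

/-! The exergy `ℰ t = ⟪e, z t⟫` is linear in the state, so its derivative is `⟪e, ż⟫`. Pairing the
vector field with `e`, the skew-adjoint part `J` does no work, the adjoint pair `C, C*` turns the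
dissipative part into the quadratic form of `D` at `C* e`, and `B, B*` turn the input term into the
supplied power `⟪B* e, u⟫`. Semi-ellipticity of `D` makes the dissipated power nonnegative. -/

theorem inner_self_apply_eq_zero_of_skew {E : Type*} [NormedAddCommGroup E] [InnerProductSpace ℝ E]
    {J : E →ₗ[ℝ] E} (hJ : ∀ x y : E, ⟪x, J y⟫ = -⟪y, J x⟫) (x : E) : ⟪x, J x⟫ = 0 := by
  linarith [hJ x x]

theorem inner_skew_sub_dissipation_add_input {E F U : Type*}
    [NormedAddCommGroup E] [InnerProductSpace ℝ E]
    [NormedAddCommGroup F] [InnerProductSpace ℝ F]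
    [NormedAddCommGroup U] [InnerProductSpace ℝ U]
    {J : E →ₗ[ℝ] E} (hJ : ∀ x y : E, ⟪x, J y⟫ = -⟪y, J x⟫)
    {C : F →ₗ[ℝ] E} {Cstar : E →ₗ[ℝ] F} (hCadj : ∀ (x : E) (y : F), ⟪x, C y⟫ = ⟪Cstar x, y⟫)
    (D : F →ₗ[ℝ] F)
    {B : U →ₗ[ℝ] E} {Bstar : E →ₗ[ℝ] U} (hBadj : ∀ (x : E) (v : U), ⟪x, B v⟫ = ⟪Bstar x, v⟫)
    (e : E) (v : U) :
    ⟪e, (J - C ∘ₗ D ∘ₗ Cstar) e + B v⟫ = -⟪Cstar e, D (Cstar e)⟫ + ⟪Bstar e, v⟫ := by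
  simp only [LinearMap.sub_apply, LinearMap.comp_apply, inner_add_right, inner_sub_right,
    inner_self_apply_eq_zero_of_skew hJ, hCadj, hBadj, zero_sub]

theorem HasDerivAt.const_inner {E : Type*} [NormedAddCommGroup E] [InnerProductSpace ℝ E]
    {z : ℝ → E} {z' : E} {t : ℝ} (e : E) (hz : HasDerivAt z z' t) :
    HasDerivAt (fun t => ⟪e, z t⟫) ⟪e, z'⟫ t := by
  simpa using (hasDerivAt_const t e).inner ℝ hz

theorem exergy_balance_inequality_general
    {E F U : Type*} [NormedAddCommGroup E] [InnerProductSpace ℝ E]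
    [NormedAddCommGroup F] [InnerProductSpace ℝ F]
    [NormedAddCommGroup U] [InnerProductSpace ℝ U]
    (J : E →ₗ[ℝ] E) (hJ : ∀ x y : E, ⟪x, J y⟫ = -⟪y, J x⟫)
    (C : F →ₗ[ℝ] E) (Cstar : E →ₗ[ℝ] F)
    (hCadj : ∀ (x : E) (y : F), ⟪x, C y⟫ = ⟪Cstar x, y⟫)
    (D : F →ₗ[ℝ] F)
    (hD : ∀ y : F, 0 ≤ ⟪y, D y⟫)
    (B : U →ₗ[ℝ] E) (Bstar : E →ₗ[ℝ] U)
    (hBadj : ∀ (x : E) (v : U), ⟪x, B v⟫ = ⟪Bstar x, v⟫)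
    (e : E) (z : ℝ → E) (u : ℝ → U)
    (hz : ∀ t : ℝ, HasDerivAt z ((J - C ∘ₗ D ∘ₗ Cstar) e + B (u t)) t) :
    ∀ t : ℝ,
      HasDerivAt (fun t => ⟪e, z t⟫) (-⟪Cstar e, D (Cstar e)⟫ + ⟪Bstar e, u t⟫) t ∧
      -⟪Cstar e, D (Cstar e)⟫ + ⟪Bstar e, u t⟫ ≤ ⟪Bstar e, u t⟫ := fun t =>
  ⟨inner_skew_sub_dissipation_add_input hJ hCadj D hBadj e (u t) ▸ (hz t).const_inner e,
    by linarith [hD (Cstar e)]⟩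

/-- Abstract exergy balance inequality for the port-Hamiltonian reformulation:
along any solution of `z' = (J - C∘D∘C*) e + B u`, the exergy
`ℰ t = ⟪e, z t⟫` satisfies
`ℰ' t = -⟪C* e, D (C* e)⟫ + ⟪B* e, u t⟫ ≤ ⟪B* e, u t⟫`. -/
theorem exergy_balance_inequality
    {E F U : Type*} [NormedAddCommGroup E] [InnerProductSpace ℝ E]
    [NormedAddCommGroup F] [InnerProductSpace ℝ F]
    [NormedAddCommGroup U] [InnerProductSpace ℝ U]
    (J : E →ₗ[ℝ] E) (hJ : ∀ x y : E, ⟪x, J y⟫ = -⟪y, J x⟫)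
    (C : F →ₗ[ℝ] E) (Cstar : E →ₗ[ℝ] F)
    (hCadj : ∀ (x : E) (y : F), ⟪x, C y⟫ = ⟪Cstar x, y⟫)
    (D : F →ₗ[ℝ] F)
    (hDsym : ∀ y y' : F, ⟪y, D y'⟫ = ⟪y', D y⟫)
    (hD : ∀ y : F, 0 ≤ ⟪y, D y⟫)
    (B : U →ₗ[ℝ] E) (Bstar : E →ₗ[ℝ] U)
    (hBadj : ∀ (x : E) (v : U), ⟪x, B v⟫ = ⟪Bstar x, v⟫)
    (e : E) (z : ℝ → E) (u : ℝ → U)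
    (hz : ∀ t : ℝ, HasDerivAt z ((J - C ∘ₗ D ∘ₗ Cstar) e + B (u t)) t) :
    ∀ t : ℝ,
      HasDerivAt (fun t => ⟪e, z t⟫) (-⟪Cstar e, D (Cstar e)⟫ + ⟪Bstar e, u t⟫) t ∧
      -⟪Cstar e, D (Cstar e)⟫ + ⟪Bstar e, u t⟫ ≤ ⟪Bstar e, u t⟫ :=
  exergy_balance_inequality_general J hJ C Cstar hCadj D hD B Bstar hBadj e z u hz
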